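/- Let T be a finite tree rooted at a vertex r. Then for every vertex v of T, rho'(T_v) equals the sum over all children u of v of rho_e^o(T_u). -/

import Mathlib

open scoped Classical

variable {V : Type*}

/-- Two edges `e₁, e₂` have a common edge in `H` if some edge of `H`, different from both,
joins an endvertex of `e₁` to an endvertex of `e₂`. -/
def HasCommonEdge (H : SimpleGraph V) (e₁ e₂ : Sym2 V) : Prop :=
  ∃ x y : V, x ∈ e₁ ∧ y ∈ e₂ ∧ H.Adj x y ∧ s(x, y) ≠ e₁ ∧ s(x, y) ≠ e₂

/-- `S` is an edge open packing set of `H`. -/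
def IsEOP (H : SimpleGraph V) (S : Set (Sym2 V)) : Prop :=
  S ⊆ H.edgeSet ∧ ∀ e₁ ∈ S, ∀ e₂ ∈ S, e₁ ≠ e₂ → ¬ HasCommonEdge H e₁ e₂

/-- The edge open packing number of `H`: the maximum cardinality of an EOP set of `H`. -/
noncomputable def eopNum (H : SimpleGraph V) : ℕ :=
  sSup {n | ∃ S : Set (Sym2 V), IsEOP H S ∧ S.ncard = n}

/-- `deg_S(x)`: the number of edges of `S` incident with `x`. -/
noncomputable def degS (S : Set (Sym2 V)) (x : V) : ℕ :=
  {e ∈ S | x ∈ e}.ncard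

/-- In the tree `T` rooted at `r`, the vertex `u` belongs to the subtree `T_v` (i.e. `u` is
`v` itself or a descendant of `v`) iff every walk from `u` to the root `r` passes through
`v`. -/
def InSubtree (T : SimpleGraph V) (r v u : V) : Prop :=
  ∀ p : T.Walk u r, v ∈ p.support

/-- The subtree `T_v` of the tree `T` rooted at `r`, induced by `v` together with all of its
descendants (realized as the subgraph of `T` on the same vertex set whose edges are exactly
the edges of `T` with both endvertices in `T_v`). -/
def subtree (T : SimpleGraph V) (r v : V) : SimpleGraph V where
  Adj a b := T.Adj a b ∧ InSubtree T r v a ∧ InSubtree T r v b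
  symm := ⟨by rintro a b ⟨h, ha, hb⟩; exact ⟨h.symm, hb, ha⟩⟩
  loopless := ⟨fun a h => T.irrefl h.1⟩

/-- `ρᶜ(H, v)`: the maximum cardinality of an EOP set `S` of `H` such that `deg_S(v) ≥ 1`
and every vertex joined to `v` by an edge of `S` has exactly one incident edge in `S`
(i.e. `v` is the center of a star of the subgraph induced by `S`); `0` if no such set
exists. -/
noncomputable def rhoC (H : SimpleGraph V) (v : V) : ℕ :=
  sSup {n | ∃ S : Set (Sym2 V), IsEOP H S ∧ 1 ≤ degS S v ∧
    (∀ u : V, s(v, u) ∈ S → degS S u = 1) ∧ S.ncard = n}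

/-- `ρˡ(H, v)`: the maximum cardinality of an EOP set `S` of `H` with `deg_S(v) = 1`
(i.e. `v` is a leaf of a star of the subgraph induced by `S`); `0` if no such set exists. -/
noncomputable def rhoL (H : SimpleGraph V) (v : V) : ℕ :=
  sSup {n | ∃ S : Set (Sym2 V), IsEOP H S ∧ degS S v = 1 ∧ S.ncard = n}

/-- `ρ'(H, v)`: the maximum cardinality of an EOP set `S` of `H` with `deg_S(v) = 0`. -/
noncomputable def rhoP (H : SimpleGraph V) (v : V) : ℕ :=
  sSup {n | ∃ S : Set (Sym2 V), IsEOP H S ∧ degS S v = 0 ∧ S.ncard = n}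

/-- `ρ''(H, v)`: the maximum cardinality of an EOP set `S` of `H` with `deg_S(x) = 0` for
every vertex `x` in the closed neighborhood of `v` in `H`. -/
noncomputable def rhoPP (H : SimpleGraph V) (v : V) : ℕ :=
  sSup {n | ∃ S : Set (Sym2 V), IsEOP H S ∧
    (∀ x : V, x = v ∨ H.Adj v x → degS S x = 0) ∧ S.ncard = n}

/-! Deleting `v` from `T_v` leaves the subtrees `T_u` of the children `u` of `v`, pairwise
vertex-disjoint and with no edge between two of them. An EOP set of `T_v` avoiding `v` therefore
splits into EOP sets of the `T_u`; conversely, a union of EOP sets of the `T_u` is an EOP set of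
`T_v` avoiding `v`, because a common edge of two of its edges misses `v` and hence lies inside a
single `T_u`. -/

namespace SimpleGraph

def restrict (H : SimpleGraph V) (A : Set V) : SimpleGraph V where
  Adj a b := H.Adj a b ∧ a ∈ A ∧ b ∈ A
  symm := ⟨fun _ _ ⟨h, ha, hb⟩ => ⟨h.symm, hb, ha⟩⟩
  loopless := ⟨fun _ h => H.irrefl h.1⟩

variable {H : SimpleGraph V} {A B : Set V}

lemma restrict_le : H.restrict A ≤ H := fun _ _ h => h.1

lemma mem_edgeSet_restrict {e : Sym2 V} :
    e ∈ (H.restrict A).edgeSet ↔ e ∈ H.edgeSet ∧ ∀ x ∈ e, x ∈ A := by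
  induction e using Sym2.ind
  simp [restrict]

lemma disjoint_edgeSet_restrict (h : Disjoint A B) :
    Disjoint (H.restrict A).edgeSet (H.restrict B).edgeSet := by
  refine Set.disjoint_left.2 fun e heA heB => ?_
  induction e using Sym2.ind with
  | _ x y => exact h.notMem_of_mem_left heA.2.1 heB.2.1

end SimpleGraph

open SimpleGraph

section Packing

variable {H G : SimpleGraph V} {S S' : Set (Sym2 V)}

lemma IsEOP.of_le (hS : IsEOP H S) (hGH : G ≤ H) (hS'S : S' ⊆ S) (hS'G : S' ⊆ G.edgeSet) :
    IsEOP G S' :=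
  ⟨hS'G, fun e₁ h₁ e₂ h₂ hne ⟨x, y, hx, hy, hxy, hne₁, hne₂⟩ =>
    hS.2 e₁ (hS'S h₁) e₂ (hS'S h₂) hne ⟨x, y, hx, hy, hGH hxy, hne₁, hne₂⟩⟩

lemma degS_eq_zero_iff [Finite V] {x : V} : degS S x = 0 ↔ ∀ e ∈ S, x ∉ e := by
  rw [degS, Set.ncard_eq_zero (Set.toFinite _), Set.eq_empty_iff_forall_notMem]
  simp

lemma IsEOP.ncard_le_eopNum [Finite V] (hS : IsEOP H S) : S.ncard ≤ eopNum H :=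
  le_csSup ⟨Nat.card (Sym2 V), by rintro _ ⟨S, -, rfl⟩; exact Set.ncard_le_card S⟩ ⟨S, hS, rfl⟩

lemma exists_isEOP_ncard_eq_eopNum [Finite V] (H : SimpleGraph V) :
    ∃ S, IsEOP H S ∧ S.ncard = eopNum H :=
  Nat.sSup_mem (s := {n | ∃ S, IsEOP H S ∧ S.ncard = n})
    ⟨0, ∅, ⟨Set.empty_subset _, by simp⟩, Set.ncard_empty _⟩
    ⟨Nat.card (Sym2 V), by rintro _ ⟨S, -, rfl⟩; exact Set.ncard_le_card S⟩

end Packing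

/-- Typically `A i`, `i ∈ s`, are the vertex sets of the components of `H - v`. -/
structure SplitsAt {ι : Type*} (H : SimpleGraph V) (v : V) (s : Set ι) (A : ι → Set V) :
    Prop where
  pairwiseDisjoint : s.PairwiseDisjoint A
  notMem : ∀ i ∈ s, v ∉ A i
  exists_of_adj : ∀ x y, H.Adj x y → x ≠ v → y ≠ v → ∃ i ∈ s, x ∈ A i ∧ y ∈ A i

namespace SplitsAt

variable {ι : Type*} {H : SimpleGraph V} {v : V} {s : Set ι} {A : ι → Set V}

lemma eq_of_adj (hA : SplitsAt H v s A) {i j : ι} (hi : i ∈ s) (hj : j ∈ s) {x y : V}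
    (hx : x ∈ A i) (hy : y ∈ A j) (hxy : H.Adj x y) : i = j := by
  obtain ⟨k, hk, hxk, hyk⟩ := hA.exists_of_adj x y hxy (ne_of_mem_of_not_mem hx (hA.notMem i hi))
    (ne_of_mem_of_not_mem hy (hA.notMem j hj))
  rw [hA.pairwiseDisjoint.elim hi hk (Set.not_disjoint_iff.2 ⟨x, hx, hxk⟩),
    hA.pairwiseDisjoint.elim hj hk (Set.not_disjoint_iff.2 ⟨y, hy, hyk⟩)]

lemma exists_mem_edgeSet_restrict (hA : SplitsAt H v s A) {e : Sym2 V} (he : e ∈ H.edgeSet)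
    (hv : v ∉ e) : ∃ i ∈ s, e ∈ (H.restrict (A i)).edgeSet := by
  induction e using Sym2.ind with
  | _ x y =>
    obtain ⟨i, hi, hx, hy⟩ := hA.exists_of_adj x y he (fun h => hv (h ▸ Sym2.mem_mk_left x y))
      (fun h => hv (h ▸ Sym2.mem_mk_right x y))
    exact ⟨i, hi, he, hx, hy⟩

lemma pairwiseDisjoint_edgeSet (hA : SplitsAt H v s A) :
    s.PairwiseDisjoint fun i => (H.restrict (A i)).edgeSet :=
  fun _ hi _ hj hij => disjoint_edgeSet_restrict (hA.pairwiseDisjoint hi hj hij)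

lemma isEOP_biUnion (hA : SplitsAt H v s A) {S : ι → Set (Sym2 V)}
    (hS : ∀ i ∈ s, IsEOP (H.restrict (A i)) (S i)) : IsEOP H (⋃ i ∈ s, S i) := by
  refine ⟨Set.iUnion₂_subset fun i hi => (hS i hi).1.trans (edgeSet_subset_edgeSet.2 restrict_le),
    ?_⟩
  simp only [Set.mem_iUnion₂]
  -- a common edge misses `v`, so it lies in the piece of either of its endpoints
  rintro e₁ ⟨i, hi, he₁⟩ e₂ ⟨j, hj, he₂⟩ hne ⟨x, y, hx, hy, hxy, hne₁, hne₂⟩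
  have hxA : x ∈ A i := (mem_edgeSet_restrict.1 ((hS i hi).1 he₁)).2 x hx
  have hyA : y ∈ A j := (mem_edgeSet_restrict.1 ((hS j hj).1 he₂)).2 y hy
  obtain rfl := hA.eq_of_adj hi hj hxA hyA hxy
  exact (hS i hi).2 e₁ he₁ e₂ he₂ hne ⟨x, y, hx, hy, ⟨hxy, hxA, hyA⟩, hne₁, hne₂⟩

lemma rhoP_eq_finsum_eopNum [Finite V] (hA : SplitsAt H v s A) (hs : s.Finite) :
    rhoP H v = ∑ᶠ i ∈ s, eopNum (H.restrict (A i)) := by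
  have hfin : ∀ S : ι → Set (Sym2 V), ∀ i ∈ s, (S i).Finite := fun _ _ _ => Set.toFinite _
  refine IsGreatest.csSup_eq ⟨?_, ?_⟩
  · choose S hS hcard using fun i => exists_isEOP_ncard_eq_eopNum (H.restrict (A i))
    refine ⟨⋃ i ∈ s, S i, hA.isEOP_biUnion fun i _ => hS i, ?_, ?_⟩
    · simp only [degS_eq_zero_iff, Set.mem_iUnion₂]
      rintro e ⟨i, hi, he⟩ hv
      exact hA.notMem i hi ((mem_edgeSet_restrict.1 ((hS i).1 he)).2 v hv)
    · rw [hs.ncard_biUnion (hfin S) (hA.pairwiseDisjoint_edgeSet.mono_on fun i _ => (hS i).1)]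
      exact finsum_mem_congr rfl fun i _ => hcard i
  · rintro _ ⟨S, hS, hdeg, rfl⟩
    have hcover : S = ⋃ i ∈ s, S ∩ (H.restrict (A i)).edgeSet := by
      refine (Set.iUnion₂_subset fun _ _ => Set.inter_subset_left).antisymm' fun e he => ?_
      obtain ⟨i, hi, hei⟩ := hA.exists_mem_edgeSet_restrict (hS.1 he) (degS_eq_zero_iff.1 hdeg e he)
      exact Set.mem_biUnion hi ⟨he, hei⟩
    rw [hcover, hs.ncard_biUnion (hfin _)
      (hA.pairwiseDisjoint_edgeSet.mono_on fun i _ => Set.inter_subset_right),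
      finsum_mem_eq_finite_toFinset_sum _ hs, finsum_mem_eq_finite_toFinset_sum _ hs]
    exact Finset.sum_le_sum fun i _ =>
      (hS.of_le restrict_le Set.inter_subset_left Set.inter_subset_right).ncard_le_eopNum

end SplitsAt

section Tree

variable {T : SimpleGraph V} {r : V}

lemma inSubtree_iff_mem_support (hT : T.IsTree) {u v : V} {p : T.Walk u r} (hp : p.IsPath) :
    InSubtree T r v u ↔ v ∈ p.support :=
  ⟨fun h => h p, fun hv q =>
    q.support_bypass_subset_support ((hT.existsUnique_path u r).unique q.bypass_isPath hp ▸ hv)⟩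

lemma inSubtree_self (v : V) : InSubtree T r v v := fun p => p.start_mem_support

lemma InSubtree.trans {u v x : V} (hvu : InSubtree T r v u) (hux : InSubtree T r u x) :
    InSubtree T r v x := fun p =>
  p.support_dropUntil_subset_support (hux p) (hvu (p.dropUntil u (hux p)))

lemma InSubtree.antisymm (hT : T.IsTree) {u v : V} (huv : InSubtree T r u v)
    (hvu : InSubtree T r v u) : u = v := by
  obtain ⟨p, hp, -⟩ := hT.existsUnique_path v r
  cases p with
  | nil => simpa using huv .nil
  | cons h q =>
    have hq := (Walk.cons_isPath_iff h q).1 hp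
    rcases List.mem_cons.1 (huv (.cons h q)) with rfl | hu
    · rfl
    · exact absurd (q.support_dropUntil_subset_support hu (hvu (q.dropUntil u hu))) hq.2

lemma inSubtree_or_inSubtree_of_adj (hT : T.IsTree) {x y : V} (h : T.Adj x y) :
    InSubtree T r y x ∨ InSubtree T r x y := by
  obtain ⟨p, hp, -⟩ := hT.existsUnique_path y r
  by_cases hx : x ∈ p.support
  · exact .inr ((inSubtree_iff_mem_support hT hp).2 hx)
  · exact .inl ((inSubtree_iff_mem_support hT (hp.cons hx (h := h))).2 (by simp))

lemma inSubtree_iff_of_adj (hT : T.IsTree) {x y : V} (h : T.Adj x y) (hyx : InSubtree T r y x)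
    {a : V} : InSubtree T r a x ↔ a = x ∨ InSubtree T r a y := by
  obtain ⟨p, hp, -⟩ := hT.existsUnique_path x r
  have hy : y ∈ p.support := hyx p
  have htake : p.takeUntil y hy = .cons h .nil :=
    (hT.existsUnique_path x y).unique (hp.takeUntil hy) (by simp [h.ne])
  have hsupp : p.support = x :: (p.dropUntil y hy).support := by
    conv_lhs => rw [← p.take_spec hy, htake]
    simp
  rw [inSubtree_iff_mem_support hT hp, inSubtree_iff_mem_support hT (hp.dropUntil hy), hsupp,
    List.mem_cons]

lemma inSubtree_total (hT : T.IsTree) {a b x : V} (ha : InSubtree T r a x)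
    (hb : InSubtree T r b x) : InSubtree T r a b ∨ InSubtree T r b a := by
  obtain ⟨p, hp, -⟩ := hT.existsUnique_path x r
  replace ha := ha p
  replace hb := hb p
  induction p with
  | nil =>
    simp only [Walk.support_nil, List.mem_singleton] at ha hb
    rw [ha, hb]
    exact .inl (inSubtree_self _)
  | cons h q ih =>
    have hq := (Walk.cons_isPath_iff h q).1 hp
    rcases List.mem_cons.1 ha with rfl | haq
    · exact .inr ((inSubtree_iff_mem_support hT hp).2 hb)
    rcases List.mem_cons.1 hb with rfl | hbq
    · exact .inl ((inSubtree_iff_mem_support hT hp).2 ha)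
    exact ih hq.1 haq hbq

lemma not_inSubtree_of_child (hT : T.IsTree) {u v : V} (hvu : T.Adj v u)
    (hu : InSubtree T r v u) : ¬ InSubtree T r u v :=
  fun h => hvu.ne (hu.antisymm hT h)

lemma eq_of_inSubtree_of_child (hT : T.IsTree) {u u' v x : V}
    (hvu : T.Adj v u) (hu : InSubtree T r v u) (hvu' : T.Adj v u') (hu' : InSubtree T r v u')
    (hx : InSubtree T r u x) (hx' : InSubtree T r u' x) : u = u' := by
  wlog h : InSubtree T r u u' generalizing u u'
  · exact (this hvu' hu' hvu hu hx' hx ((inSubtree_total hT hx hx').resolve_left h)).symm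
  exact ((inSubtree_iff_of_adj hT hvu'.symm hu').1 h).resolve_right
    (not_inSubtree_of_child hT hvu hu)

lemma exists_child_inSubtree (hT : T.IsTree) {v x : V} (hx : InSubtree T r v x) (hxv : x ≠ v) :
    ∃ u, T.Adj v u ∧ InSubtree T r v u ∧ InSubtree T r u x := by
  obtain ⟨p, hp, -⟩ := hT.existsUnique_path x r
  replace hx := hx p
  induction p with
  | nil => exact absurd (List.mem_singleton.1 hx).symm hxv
  | @cons x y _ h q ih =>
    have hq := (Walk.cons_isPath_iff h q).1 hp
    have hyx := (inSubtree_iff_mem_support hT hp (v := y)).2 (by simp)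
    have hvq : v ∈ q.support := (List.mem_cons.1 hx).resolve_left hxv.symm
    by_cases hyv : y = v
    · subst hyv
      exact ⟨x, h.symm, (inSubtree_iff_mem_support hT hp).2 hx, inSubtree_self x⟩
    · obtain ⟨u, hvu, hu, huy⟩ := ih hyv hq.1 hvq
      exact ⟨u, hvu, hu, huy.trans hyx⟩

lemma inSubtree_of_adj_of_child (hT : T.IsTree) {u v x y : V} (hvu : T.Adj v u)
    (hu : InSubtree T r v u) (hxy : T.Adj x y) (hux : InSubtree T r u x)
    (hvy : InSubtree T r v y) (hyv : y ≠ v) : InSubtree T r u y := by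
  rcases inSubtree_or_inSubtree_of_adj hT hxy with hyx | hxy'
  · rcases (inSubtree_iff_of_adj hT hxy hyx).1 hux with rfl | h
    · -- `y` is then the parent of the child `u` of `v`, which forces `y = v`
      rcases (inSubtree_iff_of_adj hT hvu.symm hu).1 hyx with rfl | h
      · exact absurd rfl hxy.ne
      · exact absurd (h.antisymm hT hvy) hyv
    · exact h
  · exact hux.trans hxy'

lemma splitsAt_children (hT : T.IsTree) (v : V) :
    SplitsAt (subtree T r v) v {u | T.Adj v u ∧ InSubtree T r v u}
      fun u => {x | InSubtree T r u x} where
  pairwiseDisjoint u hu u' hu' huu' := Set.disjoint_left.2 fun _ hx hx' =>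
    huu' (eq_of_inSubtree_of_child hT hu.1 hu.2 hu'.1 hu'.2 hx hx')
  notMem u hu := not_inSubtree_of_child hT hu.1 hu.2
  exists_of_adj x y hxy hxv hyv := by
    obtain ⟨u, hvu, hu, hux⟩ := exists_child_inSubtree hT hxy.2.1 hxv
    exact ⟨u, ⟨hvu, hu⟩, hux, inSubtree_of_adj_of_child hT hvu hu hxy.1 hux hxy.2.2 hyv⟩

lemma subtree_eq_restrict {u v : V} (hu : InSubtree T r v u) :
    subtree T r u = (subtree T r v).restrict {x | InSubtree T r u x} := by
  ext a b
  simp only [subtree, restrict, Set.mem_ofPred_eq]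
  exact ⟨fun ⟨h, ha, hb⟩ => ⟨⟨h, hu.trans ha, hu.trans hb⟩, ha, hb⟩,
    fun ⟨⟨h, _⟩, ha, hb⟩ => ⟨h, ha, hb⟩⟩

end Tree

theorem stmt17 [Fintype V] (T : SimpleGraph V) (hT : T.IsTree) (r v : V) :
    rhoP (subtree T r v) v =
      ∑ᶠ u ∈ {u : V | T.Adj v u ∧ InSubtree T r v u}, eopNum (subtree T r u) := by
  rw [(splitsAt_children hT v).rhoP_eq_finsum_eopNum (Set.toFinite _)]
  exact finsum_mem_congr rfl fun u hu => (congrArg eopNum (subtree_eq_restrict hu.2)).symm
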